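/- The only functions p in R_1 that attain the value 0 at two distinct angles and the value 1 at two distinct angles (per period) are p(θ) = (1 - cos(θ - θ_0))(1 + cos(θ - θ_0)) = sin²(θ - θ_0), for θ_0 ∈ [0, π). -/

import Mathlib

/-!
Put `z = e^{iθ}`. Then `z² p(θ)` is a complex polynomial `P(z)` of degree at most 4, and
`z² (1 - p(θ))` is `z² - P(z)`. A zero of `p` or of `1 - p` is an extremum of `p`, hence a
double root of `P` resp. of `X² - P` on the unit circle, so
`P = c (X - u)² (X - v)²` and `X² - P = d (X - w)² (X - x)²`. Comparing coefficients in
`X² = c (X - u)² (X - v)² + d (X - w)² (X - x)²` forces `v = -u` and `4 c u² = -1`, and then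
`c (z² - u²)² = z² sin² (θ - θ_a)`.
-/

open Real

/-- `p` is a real trigonometric polynomial of degree at most 2. -/
def IsTrigPoly2 (p : ℝ → ℝ) : Prop :=
  ∃ c0 c1 s1 c2 s2 : ℝ, ∀ θ : ℝ,
    p θ = c0 + c1 * Real.cos θ + s1 * Real.sin θ
      + c2 * Real.cos (2 * θ) + s2 * Real.sin (2 * θ)

open Complex Polynomial

namespace Polynomial

theorem sq_X_sub_C_dvd_of_isRoot_of_isRoot_derivative {R : Type*} [CommRing R] {P : R[X]} {a : R}
    (h : P.IsRoot a) (h' : P.derivative.IsRoot a) : (X - C a) ^ 2 ∣ P := by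
  rcases eq_or_ne P 0 with rfl | hP
  · exact dvd_zero _
  · exact (le_rootMultiplicity_iff hP).1 ((one_lt_rootMultiplicity_iff_isRoot hP).2 ⟨h, h'⟩)

theorem eq_C_mul_sq_mul_sq_of_natDegree_le_four {K : Type*} [Field K] {P : K[X]}
    (hdeg : P.natDegree ≤ 4) {u v : K} (huv : u ≠ v)
    (hu : (X - C u) ^ 2 ∣ P) (hv : (X - C v) ^ 2 ∣ P) :
    P = C P.leadingCoeff * ((X - C u) ^ 2 * (X - C v) ^ 2) := by
  have hmonic : ((X - C u) ^ 2 * (X - C v) ^ 2).Monic :=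
    ((monic_X_sub_C u).pow 2).mul ((monic_X_sub_C v).pow 2)
  refine eq_leadingCoeff_mul_of_monic_of_dvd_of_natDegree_le hmonic ?_ ?_
  · exact ((isCoprime_X_sub_C_of_isUnit_sub (sub_ne_zero.2 huv).isUnit).pow).mul_dvd hu hv
  · rw [((monic_X_sub_C u).pow 2).natDegree_mul ((monic_X_sub_C v).pow 2)]
    simpa using hdeg

theorem eq_neg_of_X_sq_eq_C_mul_add_C_mul {K : Type*} [Field K] [CharZero K] {c d u v w x : K}
    (h : (X ^ 2 : K[X]) = C c * ((X - C u) ^ 2 * (X - C v) ^ 2)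
      + C d * ((X - C w) ^ 2 * (X - C x) ^ 2)) :
    v = -u ∧ 4 * c * u ^ 2 = -1 := by
  have hexp : (X ^ 2 : K[X]) = C (c + d) * X ^ 4
      + C (-2 * (c * (u + v) + d * (w + x))) * X ^ 3
      + C (c * (u ^ 2 + 4 * u * v + v ^ 2) + d * (w ^ 2 + 4 * w * x + x ^ 2)) * X ^ 2
      + C (-2 * (c * u * v * (u + v) + d * w * x * (w + x))) * X
      + C (c * u ^ 2 * v ^ 2 + d * w ^ 2 * x ^ 2) := by
    refine h.trans ?_
    simp only [map_add, map_mul, map_neg, map_ofNat, map_pow]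
    ring
  have h4 := congrArg (coeff · 4) hexp
  have h3 := congrArg (coeff · 3) hexp
  have h2 := congrArg (coeff · 2) hexp
  have h1 := congrArg (coeff · 1) hexp
  have h0 := congrArg (coeff · 0) hexp
  simp only [coeff_add, coeff_C_mul_X_pow, coeff_C_mul_X, coeff_C, coeff_X_pow] at h4 h3 h2 h1 h0
  norm_num at h4 h3 h2 h1 h0
  have hd : d = -c := by linear_combination -h4
  subst hd
  have hc : c ≠ 0 := by rintro rfl; simp at h2
  have hs : u + v = w + x := mul_left_cancel₀ hc (by linear_combination h3)
  have he : 2 * c * (u * v - w * x) = 1 := by linear_combination -h2 - c * (u + v + w + x) * hs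
  have hv : v = -u := by
    have h : 2 * c * (u * v - w * x) * (u + v) = 0 := by
      linear_combination 2 * h1 - 2 * c * w * x * hs
    rw [he, one_mul] at h
    linear_combination h
  have hwx : u * v + w * x = 0 := by
    have h : 2 * c * (u * v - w * x) * (u * v + w * x) = 0 := by linear_combination -2 * h0
    rwa [he, one_mul] at h
  subst hv
  exact ⟨rfl, by linear_combination -he - 2 * c * hwx⟩

end Polynomial

theorem IsTrigPoly2.exists_polynomial {p : ℝ → ℝ} (hp : IsTrigPoly2 p) :
    ∃ P : ℂ[X], P.natDegree ≤ 4 ∧ ∀ θ : ℝ, P.eval (exp (θ * I)) = exp (θ * I) ^ 2 * p θ := by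
  obtain ⟨c0, c1, s1, c2, s2, hp⟩ := hp
  -- `cos θ = (z + z⁻¹) / 2` and `sin θ = (z - z⁻¹) / (2i)` for `z = e^{iθ}`
  refine ⟨C ((c2 + s2 * I) / 2) + C ((c1 + s1 * I) / 2) * X + C (c0 : ℂ) * X ^ 2
    + C ((c1 - s1 * I) / 2) * X ^ 3 + C ((c2 - s2 * I) / 2) * X ^ 4, by compute_degree, fun θ => ?_⟩
  have hz : exp (θ * I) ≠ 0 := Complex.exp_ne_zero _
  rw [hp, Real.cos_two_mul, Real.sin_two_mul]
  push_cast
  simp only [Complex.cos, Complex.sin, neg_mul, Complex.exp_neg, eval_add, eval_mul, eval_pow,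
    eval_X, eval_C]
  field_simp
  ring_nf

theorem IsTrigPoly2.differentiable {p : ℝ → ℝ} (hp : IsTrigPoly2 p) : Differentiable ℝ p := by
  obtain ⟨c0, c1, s1, c2, s2, hp⟩ := hp
  rw [funext hp]
  fun_prop

theorem sq_X_sub_C_exp_mul_I_dvd {P : ℂ[X]} {n : ℕ} {q : ℝ → ℝ}
    (hP : ∀ θ : ℝ, P.eval (exp (θ * I)) = exp (θ * I) ^ n * q θ) {a : ℝ}
    (hqa : q a = 0) (hq' : HasDerivAt q 0 a) : (X - C (exp (a * I))) ^ 2 ∣ P := by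
  have hexp : HasDerivAt (fun θ : ℝ => exp (θ * I)) (exp (a * I) * I) a := by
    simpa using ((hasDerivAt_id (a : ℂ)).mul_const I).cexp.comp_ofReal
  have hlhs : HasDerivAt (fun θ : ℝ => P.eval (exp (θ * I))) _ a := (P.hasDerivAt _).comp a hexp
  have hrhs : HasDerivAt (fun θ : ℝ => exp (θ * I) ^ n * q θ) _ a :=
    (hexp.pow n).mul hq'.ofReal_comp
  rw [show (fun θ : ℝ => P.eval (exp (θ * I))) = _ from funext hP] at hlhs
  have h := hlhs.unique hrhs
  simp only [hqa, ofReal_zero, mul_zero, add_zero] at h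
  refine sq_X_sub_C_dvd_of_isRoot_of_isRoot_derivative ?_ ?_
  · simp [IsRoot, hP, hqa]
  · simpa [IsRoot, Complex.exp_ne_zero, I_ne_zero] using h

theorem exp_mul_I_sq_mul_sin_sub_sq (θ a : ℝ) :
    exp (θ * I) ^ 2 * (Real.sin (θ - a) ^ 2 : ℝ) =
      -(exp (θ * I) ^ 2 - exp (a * I) ^ 2) ^ 2 / (4 * exp (a * I) ^ 2) := by
  have hθ : exp (θ * I) ≠ 0 := Complex.exp_ne_zero _
  have ha : exp (a * I) ≠ 0 := Complex.exp_ne_zero _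
  push_cast
  simp only [Complex.sin, sub_mul, neg_sub, Complex.exp_sub]
  field_simp
  ring_nf
  rw [I_sq]
  ring

theorem exp_mul_I_injOn_Ico : Set.InjOn (fun θ : ℝ => exp (θ * I)) (Set.Ico 0 (2 * π)) :=
  fun _ ha _ hb h => Circle.exp_injOn_Ico (by simp) ha hb (Circle.ext (by simpa using h))

theorem exists_mem_Ico_forall_sin_sub_sq_eq {a : ℝ} (ha : a ∈ Set.Ico 0 (2 * π)) :
    ∃ θ₀ ∈ Set.Ico 0 π, ∀ θ : ℝ, Real.sin (θ - a) ^ 2 = Real.sin (θ - θ₀) ^ 2 := by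
  by_cases hlt : a < π
  · exact ⟨a, ⟨ha.1, hlt⟩, fun _ => rfl⟩
  · refine ⟨a - π, ⟨by linarith, by linarith [ha.2]⟩, fun θ => ?_⟩
    rw [sub_sub_eq_add_sub, add_sub_right_comm, Real.sin_add_pi, neg_sq]

/-- If `p ∈ R₁` attains the value `0` at two distinct angles of `[0, 2π)` and the value `1`
at two distinct angles of `[0, 2π)`, then `p(θ) = sin²(θ - θ₀)` for some `θ₀ ∈ [0, π)`. -/
theorem stmt10 (p : ℝ → ℝ) (hp : IsTrigPoly2 p)
    (hb : ∀ θ : ℝ, p θ ∈ Set.Icc (0 : ℝ) 1)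
    (θa θb θc θd : ℝ)
    (hamem : θa ∈ Set.Ico (0 : ℝ) (2 * Real.pi)) (hbmem : θb ∈ Set.Ico (0 : ℝ) (2 * Real.pi))
    (hcmem : θc ∈ Set.Ico (0 : ℝ) (2 * Real.pi)) (hdmem : θd ∈ Set.Ico (0 : ℝ) (2 * Real.pi))
    (hab : θa ≠ θb) (hcd : θc ≠ θd)
    (h0a : p θa = 0) (h0b : p θb = 0) (h1c : p θc = 1) (h1d : p θd = 1) :
    ∃ θ₀ ∈ Set.Ico (0 : ℝ) Real.pi, ∀ θ : ℝ, p θ = Real.sin (θ - θ₀) ^ 2 := by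
  obtain ⟨P, hdeg, hP⟩ := hp.exists_polynomial
  have hQ (θ : ℝ) : (X ^ 2 - P).eval (exp (θ * I)) = exp (θ * I) ^ 2 * ((1 - p θ : ℝ) : ℂ) := by
    simp only [eval_sub, eval_pow, eval_X, hP]
    push_cast
    ring
  have hcrit (t : ℝ) (ht : IsLocalExtr p t) : HasDerivAt p 0 t :=
    ht.deriv_eq_zero ▸ (hp.differentiable t).hasDerivAt
  have hmin (t : ℝ) (ht : p t = 0) : HasDerivAt p 0 t :=
    hcrit t (.inl (.of_forall fun y => ht ▸ (hb y).1))
  have hmax (t : ℝ) (ht : p t = 1) : HasDerivAt (fun θ => 1 - p θ) 0 t := by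
    simpa using (hcrit t (.inr (.of_forall fun y => ht ▸ (hb y).2))).const_sub 1
  have hPeq := eq_C_mul_sq_mul_sq_of_natDegree_le_four hdeg
    (exp_mul_I_injOn_Ico.ne hamem hbmem hab)
    (sq_X_sub_C_exp_mul_I_dvd hP h0a (hmin _ h0a)) (sq_X_sub_C_exp_mul_I_dvd hP h0b (hmin _ h0b))
  have hQeq := eq_C_mul_sq_mul_sq_of_natDegree_le_four
    ((natDegree_sub_le _ _).trans (by simpa using hdeg)) (exp_mul_I_injOn_Ico.ne hcmem hdmem hcd)
    (sq_X_sub_C_exp_mul_I_dvd hQ (by simp [h1c]) (hmax _ h1c))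
    (sq_X_sub_C_exp_mul_I_dvd hQ (by simp [h1d]) (hmax _ h1d))
  obtain ⟨hv, hc⟩ := eq_neg_of_X_sq_eq_C_mul_add_C_mul
    ((add_sub_cancel P (X ^ 2)).symm.trans (congrArg₂ (· + ·) hPeq hQeq))
  have hsin (θ : ℝ) : p θ = Real.sin (θ - θa) ^ 2 := by
    have hz := Complex.exp_ne_zero (θ * I)
    have ha := Complex.exp_ne_zero (θa * I)
    refine Complex.ofReal_injective (mul_left_cancel₀ (pow_ne_zero 2 hz) ?_)
    rw [← hP, exp_mul_I_sq_mul_sin_sub_sq, hPeq, hv]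
    simp only [eval_mul, eval_pow, eval_sub, eval_X, eval_C, map_neg, eval_neg]
    rw [eq_div_iff (by simp [ha])]
    linear_combination (exp (θ * I) ^ 2 - exp (θa * I) ^ 2) ^ 2 * hc
  obtain ⟨θ₀, hθ₀, hshift⟩ := exists_mem_Ico_forall_sin_sub_sq_eq hamem
  exact ⟨θ₀, hθ₀, fun θ => (hsin θ).trans (hshift θ)⟩
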